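/- For integers l ≥ 2 and m ≥ 3, and every r with 1 ≤ r ≤ 3, the r-dynamic chromatic number of the lexicographic product P_l[K_{1,m}] of the path on l vertices with the star on m+1 vertices equals 4. -/

import Mathlib

open SimpleGraph

/-- Lexicographic product of simple graphs. -/
def SimpleGraph.lexProd {α β : Type*} (G₁ : SimpleGraph α) (G₂ : SimpleGraph β) :
    SimpleGraph (α × β) where
  Adj x y := G₁.Adj x.1 y.1 ∨ (x.1 = y.1 ∧ G₂.Adj x.2 y.2)
  symm := by
    constructor
    rintro x y (h | ⟨h1, h2⟩)
    · exact Or.inl h.symm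
    · exact Or.inr ⟨h1.symm, h2.symm⟩
  loopless := by
    constructor
    rintro x (h | ⟨-, h⟩)
    · exact G₁.loopless.irrefl _ h
    · exact G₂.loopless.irrefl _ h

/-- `c` is a proper coloring such that each vertex `v` sees at least
`min r (deg v)` distinct colors among its neighbors. -/
def SimpleGraph.IsRDynamicColoring {α : Type*} (G : SimpleGraph α) (r : ℕ) (c : α → ℕ) : Prop :=
  (∀ u v, G.Adj u v → c u ≠ c v) ∧
  ∀ v, min r (G.neighborSet v).ncard ≤ (c '' G.neighborSet v).ncard

/-- The `r`-dynamic chromatic number: least `k` such that there is an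
`r`-dynamic coloring with colors in `{0, …, k-1}`. -/
noncomputable def SimpleGraph.rDynChromaticNumber {α : Type*} (G : SimpleGraph α) (r : ℕ) : ℕ :=
  sInf {k | ∃ c : α → ℕ, G.IsRDynamicColoring r c ∧ ∀ v, c v < k}

/-- Maximum degree (via `Set.ncard` of neighbor sets). -/
noncomputable def SimpleGraph.maxDeg {α : Type*} (G : SimpleGraph α) : ℕ :=
  sSup (Set.range fun v => (G.neighborSet v).ncard)

/-- Minimum degree (via `Set.ncard` of neighbor sets). -/
noncomputable def SimpleGraph.minDeg {α : Type*} (G : SimpleGraph α) : ℕ :=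
  sInf (Set.range fun v => (G.neighborSet v).ncard)

/-- The star `K_{1,m}`: center `0` adjacent to the `m` leaves. -/
def starGraph (m : ℕ) : SimpleGraph (Fin (m + 1)) :=
  SimpleGraph.fromRel (fun i _ => i = 0)

/-- The double star `K_{1,m,m}`: center `0`, middle vertices `1,…,m`,
outer leaf `i + m` attached to middle vertex `i`. -/
def doubleStarGraph (m : ℕ) : SimpleGraph (Fin (2 * m + 1)) :=
  SimpleGraph.fromRel (fun i j =>
    ((i : ℕ) = 0 ∧ 1 ≤ (j : ℕ) ∧ (j : ℕ) ≤ m) ∨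
    (1 ≤ (i : ℕ) ∧ (i : ℕ) ≤ m ∧ (j : ℕ) = (i : ℕ) + m))

/-- The triple star `K_{1,m,m,m}`: center `0`, middle vertices `1,…,m`,
vertex `i + m` attached to `i` for `1 ≤ i ≤ 2m`. -/
def tripleStarGraph (m : ℕ) : SimpleGraph (Fin (3 * m + 1)) :=
  SimpleGraph.fromRel (fun i j =>
    ((i : ℕ) = 0 ∧ 1 ≤ (j : ℕ) ∧ (j : ℕ) ≤ m) ∨
    (1 ≤ (i : ℕ) ∧ (i : ℕ) ≤ 2 * m ∧ (j : ℕ) = (i : ℕ) + m))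

/-!
The coloring `(i, x) ↦ 2 · (i mod 2) + [x ≠ 0]` is proper, and every vertex `(i, x)` sees three
colors: that of `(i, y)` for a neighbor `y` of `x` in its own copy of the star, and both
colors of the copy of the star at a path-neighbor `j` of `i`. Conversely, two adjacent copies
of an edge of the star span a `K₄`, so fewer than four colors are impossible.
-/

lemma Nat.mul_add_ne_mul_add {b a a' x x' : ℕ} (ha : a ≠ a') (hx : x < b) (hx' : x' < b) :
    b * a + x ≠ b * a' + x' := by
  intro h
  apply ha
  have hb : 0 < b := by omega
  simpa [Nat.mul_add_div hb, Nat.div_eq_of_lt hx, Nat.div_eq_of_lt hx'] using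
    congrArg (· / b) h

namespace SimpleGraph

variable {α β : Type*} {G : SimpleGraph α} {G₁ : SimpleGraph α} {G₂ : SimpleGraph β}

lemma IsClique.lexProd {s : Set α} {t : Set β} (hs : G₁.IsClique s) (ht : G₂.IsClique t) :
    (G₁.lexProd G₂).IsClique (s ×ˢ t) := by
  rintro ⟨a, x⟩ ⟨ha, hx⟩ ⟨b, y⟩ ⟨hb, hy⟩ hne
  by_cases hab : a = b
  · subst hab
    exact Or.inr ⟨rfl, ht hx hy fun h => hne (Prod.ext rfl h)⟩
  · exact Or.inl (hs ha hb hab)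

section DynamicColoring

variable {r k : ℕ} {c : α → ℕ}

lemma IsRDynamicColoring.colorable (hc : G.IsRDynamicColoring r c) (hk : ∀ v, c v < k) :
    G.Colorable k :=
  ⟨Coloring.mk (fun v => ⟨c v, hk v⟩) fun h => by simpa [Fin.ext_iff] using hc.1 _ _ h⟩

lemma rDynChromaticNumber_le (hc : G.IsRDynamicColoring r c) (hk : ∀ v, c v < k) :
    G.rDynChromaticNumber r ≤ k :=
  Nat.sInf_le ⟨c, hc, hk⟩

/-- `c` is there only to exclude the junk value `sInf ∅ = 0` of `rDynChromaticNumber`. -/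
lemma IsClique.card_le_rDynChromaticNumber {s : Finset α} (hs : G.IsClique s)
    (hc : G.IsRDynamicColoring r c) (hk : ∀ v, c v < k) :
    s.card ≤ G.rDynChromaticNumber r := by
  obtain ⟨c', hc', hk'⟩ := Nat.sInf_mem (⟨k, c, hc, hk⟩ : {k | ∃ c : α → ℕ,
    G.IsRDynamicColoring r c ∧ ∀ v, c v < k}.Nonempty)
  exact hs.card_le_of_colorable (hc'.colorable hk')

end DynamicColoring

section LexColoring

variable {c₁ : α → ℕ} {c₂ : β → ℕ} {b : ℕ}

lemma lexProd_coloring_ne (hc₁ : ∀ u v, G₁.Adj u v → c₁ u ≠ c₁ v)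
    (hc₂ : ∀ u v, G₂.Adj u v → c₂ u ≠ c₂ v) (hb : ∀ x, c₂ x < b) (u v : α × β)
    (h : (G₁.lexProd G₂).Adj u v) : b * c₁ u.1 + c₂ u.2 ≠ b * c₁ v.1 + c₂ v.2 := by
  rcases h with h | ⟨h, h₂⟩
  · exact Nat.mul_add_ne_mul_add (hc₁ _ _ h) (hb _) (hb _)
  · rw [h]
    exact fun h' => hc₂ _ _ h₂ (by omega)

lemma three_le_ncard_image_neighborSet_lexProd [Finite α] [Finite β]
    (hc₁ : ∀ u v, G₁.Adj u v → c₁ u ≠ c₁ v) (hc₂ : ∀ u v, G₂.Adj u v → c₂ u ≠ c₂ v)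
    (hb : ∀ x, c₂ x < b) {i j : α} {x y : β} (hij : G₁.Adj i j) (hxy : G₂.Adj x y) :
    3 ≤ ((fun p : α × β => b * c₁ p.1 + c₂ p.2) '' (G₁.lexProd G₂).neighborSet (i, x)).ncard := by
  have hsub : {b * c₁ i + c₂ y, b * c₁ j + c₂ x, b * c₁ j + c₂ y} ⊆
      (fun p : α × β => b * c₁ p.1 + c₂ p.2) '' (G₁.lexProd G₂).neighborSet (i, x) := by
    rintro z (rfl | rfl | rfl)
    · exact ⟨(i, y), Or.inr ⟨rfl, hxy⟩, rfl⟩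
    · exact ⟨(j, x), Or.inl hij, rfl⟩
    · exact ⟨(j, y), Or.inl hij, rfl⟩
  have hne₁ := Nat.mul_add_ne_mul_add (hc₁ _ _ hij) (hb y) (hb x)
  have hne₂ := Nat.mul_add_ne_mul_add (hc₁ _ _ hij) (hb y) (hb y)
  have hne₃ : b * c₁ j + c₂ x ≠ b * c₁ j + c₂ y := fun h => hc₂ _ _ hxy (by omega)
  calc 3 = ({b * c₁ i + c₂ y, b * c₁ j + c₂ x, b * c₁ j + c₂ y} : Set ℕ).ncard := by
        rw [Set.ncard_insert_of_notMem (by simp only [Set.mem_insert_iff,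
            Set.mem_singleton_iff, not_or]; exact ⟨hne₁, hne₂⟩),
          Set.ncard_insert_of_notMem (by simpa using hne₃), Set.ncard_singleton]
    _ ≤ _ := Set.ncard_le_ncard hsub (Set.toFinite _)

lemma isRDynamicColoring_lexProd [Finite α] [Finite β] {r : ℕ} (hr : r ≤ 3)
    (hc₁ : ∀ u v, G₁.Adj u v → c₁ u ≠ c₁ v) (hc₂ : ∀ u v, G₂.Adj u v → c₂ u ≠ c₂ v)
    (hb : ∀ x, c₂ x < b) (h₁ : ∀ i, ∃ j, G₁.Adj i j) (h₂ : ∀ x, ∃ y, G₂.Adj x y) :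
    (G₁.lexProd G₂).IsRDynamicColoring r fun p => b * c₁ p.1 + c₂ p.2 := by
  refine ⟨lexProd_coloring_ne hc₁ hc₂ hb, fun ⟨i, x⟩ => ?_⟩
  obtain ⟨j, hij⟩ := h₁ i
  obtain ⟨y, hxy⟩ := h₂ x
  exact (min_le_left _ _).trans
    (hr.trans (three_le_ncard_image_neighborSet_lexProd hc₁ hc₂ hb hij hxy))

end LexColoring

lemma four_le_rDynChromaticNumber_lexProd [DecidableEq α] [DecidableEq β] {r k : ℕ}
    {c : α × β → ℕ} (hc : (G₁.lexProd G₂).IsRDynamicColoring r c) (hk : ∀ v, c v < k)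
    {a a' : α} {x x' : β} (ha : G₁.Adj a a') (hx : G₂.Adj x x') :
    4 ≤ (G₁.lexProd G₂).rDynChromaticNumber r := by
  have hclique : (G₁.lexProd G₂).IsClique (({a, a'} ×ˢ {x, x'} : Finset (α × β)) : Set _) := by
    rw [Finset.coe_product, Finset.coe_pair, Finset.coe_pair]
    exact (isClique_pair.2 fun _ => ha).lexProd (isClique_pair.2 fun _ => hx)
  simpa [Finset.card_product, Finset.card_pair ha.ne, Finset.card_pair hx.ne] using
    hclique.card_le_rDynChromaticNumber hc hk

lemma pathGraph_adj_mod_two_ne {l : ℕ} (u v : Fin l) (h : (pathGraph l).Adj u v) :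
    u.val % 2 ≠ v.val % 2 := by
  rw [pathGraph_adj] at h
  omega

lemma starGraph_adj_ite_ne [DecidableEq α] {r : α} (x y : α) (h : (starGraph r).Adj x y) :
    (if x = r then 0 else 1) ≠ (if y = r then 0 else 1) := by
  rw [starGraph_adj] at h
  rcases h with ⟨hne, rfl | rfl⟩ <;> simp [hne, Ne.symm hne]

end SimpleGraph

open SimpleGraph

lemma starGraph_eq_starGraph_zero (m : ℕ) : _root_.starGraph m = SimpleGraph.starGraph 0 := rfl

theorem stmt_8_general (l m r : ℕ) (hl : 2 ≤ l) (hm : 3 ≤ m) (hr3 : r ≤ 3) :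
    ((SimpleGraph.pathGraph l).lexProd (_root_.starGraph m)).rDynChromaticNumber r = 4 := by
  have : Nontrivial (Fin l) := Fin.nontrivial_iff_two_le.2 hl
  have : Nontrivial (Fin (m + 1)) := Fin.nontrivial_iff_two_le.2 (by omega)
  rw [starGraph_eq_starGraph_zero]
  have h₁ := (pathGraph_preconnected l).exists_adj_of_nontrivial
  have h₂ := (connected_starGraph (0 : Fin (m + 1))).preconnected.exists_adj_of_nontrivial
  have hb (x : Fin (m + 1)) : (if x = 0 then 0 else 1) < 2 := by split <;> omega
  have hc := isRDynamicColoring_lexProd hr3 pathGraph_adj_mod_two_ne starGraph_adj_ite_ne hb h₁ h₂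
  have hlt (v : Fin l × Fin (m + 1)) : 2 * (v.1.val % 2) + (if v.2 = 0 then 0 else 1) < 4 :=
    Nat.mul_add_lt_mul_of_lt_of_lt (Nat.mod_lt _ two_pos) (hb v.2)
  obtain ⟨_, ha⟩ := h₁ ⟨0, by omega⟩
  obtain ⟨_, hx⟩ := h₂ 0
  exact le_antisymm (rDynChromaticNumber_le hc hlt)
    (four_le_rDynChromaticNumber_lexProd hc hlt ha hx)

theorem stmt_8 (l m r : ℕ) (hl : 2 ≤ l) (hm : 3 ≤ m) (hr1 : 1 ≤ r) (hr3 : r ≤ 3) :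
    ((SimpleGraph.pathGraph l).lexProd (_root_.starGraph m)).rDynChromaticNumber r = 4 :=
  stmt_8_general l m r hl hm hr3
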